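/- arXiv:2310.05891 — 8 statements merged into one kernel-verified Lean document; each statement's English description precedes it below -/
import Mathlib

section
/- Let G be a group and P a binary relation on G satisfying: P(x,y) → P(x⁻¹·y, x⁻¹); ¬P(x,x); P(x,y) ∧ P(y,z) → P(x,z); and for all x,y, e = x ∨ e = y ∨ x = y ∨ P(x,y) ∨ P(y,x). Define C(x,y,z) iff P(x⁻¹·y, x⁻¹·z). Then C is a left-invariant cyclic order on G: C satisfies cyclicity, irreflexivity, transitivity, connectedness, and C(x,y,z) → C(u·x,u·y,u·z) for all u. -/
/-- From a positive cone `P` of a circular order, the ternary relation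
`C x y z ↔ P (x⁻¹y) (x⁻¹z)` is a left-invariant cyclic order. -/
theorem circular_order_of_positive_cone {G : Type*} [Group G] (P : G → G → Prop)
    (h_cyc : ∀ x y, P x y → P (x⁻¹ * y) x⁻¹)
    (h_irr : ∀ x, ¬ P x x)
    (h_trans : ∀ x y z, P x y → P y z → P x z)
    (h_conn : ∀ x y : G, 1 = x ∨ 1 = y ∨ x = y ∨ P x y ∨ P y x)
    (C : G → G → G → Prop) (hC : ∀ x y z, C x y z ↔ P (x⁻¹ * y) (x⁻¹ * z)) :
    (∀ x y z, C x y z → C y z x) ∧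
    (∀ x y, ¬ C x y y) ∧
    (∀ x y z u, C x y z → C x z u → C x y u) ∧
    (∀ x y z, x = y ∨ y = z ∨ z = x ∨ C x y z ∨ C x z y) ∧
    (∀ x y z u, C x y z → C (u * x) (u * y) (u * z)) := by
  refine ⟨?_, ?_, ?_, ?_, ?_⟩
  · intro x y z h
    rw [hC] at h ⊢
    have := h_cyc _ _ h
    have e1 : (x⁻¹ * y)⁻¹ * (x⁻¹ * z) = y⁻¹ * z := by group
    have e2 : (x⁻¹ * y)⁻¹ = y⁻¹ * x := by group
    rwa [e1, e2] at this
  · intro x y h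
    rw [hC] at h
    exact h_irr _ h
  · intro x y z u h1 h2
    rw [hC] at h1 h2 ⊢
    exact h_trans _ _ _ h1 h2
  · intro x y z
    rcases h_conn (x⁻¹ * y) (x⁻¹ * z) with h | h | h | h | h
    · left; have : x * (x⁻¹ * y) = x * 1 := by rw [← h]
      simpa [mul_assoc] using this.symm
    · right; right; left
      have : x * (x⁻¹ * z) = x * 1 := by rw [← h]
      simpa [mul_assoc] using this
    · right; left
      have : x * (x⁻¹ * y) = x * (x⁻¹ * z) := by rw [h]
      simpa [mul_assoc] using this
    · right; right; right; left; rw [hC]; exact h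
    · right; right; right; right; rw [hC]; exact h
  · intro x y z u h
    rw [hC] at h ⊢
    have e1 : (u * x)⁻¹ * (u * y) = x⁻¹ * y := by group
    have e2 : (u * x)⁻¹ * (u * z) = x⁻¹ * z := by group
    rw [e1, e2]; exact h
end

section
/- Let G be a group, ≤ a left-invariant total preorder on G, and H a subgroup of G that is convex with respect to ≤ (i.e., if x, z ∈ H and x ≤ y ≤ z then y ∈ H). Then the set P = {x ∈ G \ H : e ≤ x} is a subsemigroup of G, G is the disjoint union of P, H, and P⁻¹, and H·P·H ⊆ P. -/
/-- Given a left-invariant total preorder `≤` and a subgroup `H` convex with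
respect to it, the set `P = {x ∉ H : 1 ≤ x}` is a subsemigroup, `G` is the
disjoint union `P ⊔ H ⊔ P⁻¹`, and `HPH ⊆ P`. -/
theorem partition_of_convex_subgroup {G : Type*} [Group G] (le : G → G → Prop)
    (h_refl : ∀ x, le x x)
    (h_trans : ∀ x y z, le x y → le y z → le x z)
    (h_total : ∀ x y, le x y ∨ le y x)
    (h_left : ∀ x y z, le x y → le (z * x) (z * y))
    (H : Subgroup G)
    (h_convex : ∀ x y z : G, x ∈ H → z ∈ H → le x y → le y z → y ∈ H)
    (P : Set G) (hP : ∀ x, x ∈ P ↔ x ∉ H ∧ le 1 x) :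
    (∀ x y, x ∈ P → y ∈ P → x * y ∈ P) ∧
    (∀ x : G, x ∈ P ∨ x ∈ H ∨ x⁻¹ ∈ P) ∧
    (∀ x : G, ¬ (x ∈ P ∧ x ∈ H)) ∧
    (∀ x : G, ¬ (x ∈ P ∧ x⁻¹ ∈ P)) ∧
    (∀ x : G, ¬ (x ∈ H ∧ x⁻¹ ∈ P)) ∧
    (∀ h p h', h ∈ H → p ∈ P → h' ∈ H → h * p * h' ∈ P) := by

  -- helper: left-mult consequences
  have inv_le : ∀ x : G, le 1 x → le x⁻¹ 1 := by
    intro x hx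
    have := h_left 1 x x⁻¹ hx
    simpa using this
  have le_inv : ∀ x : G, le x 1 → le 1 x⁻¹ := by
    intro x hx
    have := h_left x 1 x⁻¹ hx
    simpa using this
  refine ⟨?_, ?_, ?_, ?_, ?_, ?_⟩
  · intro x y hx hy
    obtain ⟨hxH, hx1⟩ := (hP x).1 hx
    obtain ⟨hyH, hy1⟩ := (hP y).1 hy
    have hxy : le x (x * y) := by simpa using h_left 1 y x hy1
    have h1 : le 1 (x * y) := h_trans _ _ _ hx1 hxy
    refine (hP _).2 ⟨?_, h1⟩
    intro hmem
    exact hxH (h_convex 1 x (x*y) H.one_mem hmem hx1 hxy)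
  · intro x
    by_cases hxH : x ∈ H
    · exact Or.inr (Or.inl hxH)
    rcases h_total 1 x with h1 | h1
    · exact Or.inl ((hP x).2 ⟨hxH, h1⟩)
    · refine Or.inr (Or.inr ((hP x⁻¹).2 ⟨?_, le_inv x h1⟩))
      intro hmem; exact hxH (by simpa using H.inv_mem hmem)
  · intro x ⟨hxP, hxH⟩
    exact ((hP x).1 hxP).1 hxH
  · intro x ⟨hxP, hxiP⟩
    obtain ⟨hxH, hx1⟩ := (hP x).1 hxP
    obtain ⟨_, hxi1⟩ := (hP x⁻¹).1 hxiP
    have : le x 1 := by simpa using h_left 1 x⁻¹ x hxi1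
    exact hxH (h_convex 1 x 1 H.one_mem H.one_mem hx1 this)
  · intro x ⟨hxH, hxiP⟩
    exact ((hP x⁻¹).1 hxiP).1 (H.inv_mem hxH)
  · intro h p h' hh hp hh'
    obtain ⟨hpH, hp1⟩ := (hP p).1 hp
    have hnotH : h * p * h' ∉ H := by
      intro hmem
      have : p ∈ H := by
        have := H.mul_mem (H.mul_mem (H.inv_mem hh) hmem) (H.inv_mem hh')
        simpa [mul_assoc] using this
      exact hpH this
    refine (hP _).2 ⟨hnotH, ?_⟩
    -- first: 1 ≤ h * p
    have hhp : le 1 (h * p) := by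
      rcases h_total 1 (h * p) with h1 | h1
      · exact h1
      · exfalso
        have hpinv : le p h⁻¹ := by simpa using h_left (h * p) 1 h⁻¹ h1
        exact hpH (h_convex 1 p h⁻¹ H.one_mem (H.inv_mem hh) hp1 hpinv)
    -- h*p ∈ P
    have hhpH : h * p ∉ H := by
      intro hmem
      exact hpH (by simpa using H.mul_mem (H.inv_mem hh) hmem)
    -- now 1 ≤ (h*p) * h'
    rcases h_total 1 (h * p * h') with h1 | h1
    · exact h1
    · exfalso
      have h2 : le h' (h * p)⁻¹ := by
        have := h_left (h * p * h') 1 (h * p)⁻¹ h1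
        simpa [mul_assoc] using this
      have h3 : le (h * p)⁻¹ 1 := inv_le _ hhp
      have h4 : (h * p)⁻¹ ∈ H := h_convex h' (h*p)⁻¹ 1 hh' H.one_mem h2 h3
      exact hhpH (by simpa using H.inv_mem h4)
end

section
/- Let ≤ be a left-invariant total preorder on a group G. If e ≤ xⁿ for some x ∈ G and some positive integer n, then e ≤ x. -/
/-- For a left-invariant total preorder on a group, `1 ≤ xⁿ` for some positive
`n` implies `1 ≤ x`. -/
theorem le_of_le_pow {G : Type*} [Group G] (le : G → G → Prop)
    (h_refl : ∀ x, le x x)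
    (h_trans : ∀ x y z, le x y → le y z → le x z)
    (h_total : ∀ x y, le x y ∨ le y x)
    (h_left : ∀ x y z, le x y → le (z * x) (z * y)) :
    ∀ (x : G) (n : ℕ), 0 < n → le 1 (x ^ n) → le 1 x := by
  intro x n hn h1
  rcases h_total 1 x with h | hx1
  · exact h
  -- le x 1: show le (x^n) x by induction, then chain
  have key : ∀ m : ℕ, 0 < m → le (x ^ m) x := by
    intro m hm
    induction m with
    | zero => exact absurd hm (lt_irrefl 0)
    | succ k ih =>
      rcases Nat.eq_zero_or_pos k with hk | hk
      · subst hk; simpa using h_refl x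
      · have step : le (x ^ (k + 1)) (x ^ k) := by
          have := h_left x 1 (x ^ k) hx1
          simpa [pow_succ, mul_comm] using h_left x 1 (x ^ k) hx1
        exact h_trans _ _ _ step (ih hk)
  exact h_trans _ _ _ h1 (key n hn)
end

section
/- Let ≤ be a left-invariant total preorder on a group G and let x ∈ G satisfy e ≤ x. Suppose the cyclic subgroup ⟨x⟩ is cofinal with respect to every left-invariant total preorder on G (i.e., for every left total preorder ⪯ on G and every g ∈ G, there exists an integer n with g ⪯ xⁿ). Then e ≤ y·x·y⁻¹ for every y ∈ G. -/
/-- If `1 ≤ x` and the cyclic subgroup generated by `x` is cofinal with respect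
to every left-invariant total preorder on `G`, then `1 ≤ y·x·y⁻¹` for all `y`. -/
theorem conjugate_positive_of_cofinal {G : Type*} [Group G] (le : G → G → Prop)
    (h_refl : ∀ x, le x x)
    (h_trans : ∀ x y z, le x y → le y z → le x z)
    (h_total : ∀ x y, le x y ∨ le y x)
    (h_left : ∀ x y z, le x y → le (z * x) (z * y))
    (x : G) (hx : le 1 x)
    (h_cofinal : ∀ le' : G → G → Prop,
      (∀ a, le' a a) →
      (∀ a b c, le' a b → le' b c → le' a c) →
      (∀ a b, le' a b ∨ le' b a) →
      (∀ a b c, le' a b → le' (c * a) (c * b)) →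
      ∀ g : G, ∃ n : ℤ, le' g (x ^ n)) :
    ∀ y : G, le 1 (y * x * y⁻¹) := by
  -- monotonicity of powers of a "positive" element
  have key : ∀ z : G, le 1 z → ∀ k : ℕ, le 1 (z ^ (k : ℤ)) := by
    intro z hz k
    induction k with
    | zero => simpa using h_refl (1 : G)
    | succ k ih =>
      have h2 : le (z ^ (k : ℤ)) (z ^ (k : ℤ) * z) := by
        simpa using h_left 1 z (z ^ (k : ℤ)) hz
      have h3 : z ^ (((k : ℕ) + 1 : ℕ) : ℤ) = z ^ (k : ℤ) * z := by
        push_cast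
        rw [zpow_add_one]
      rw [h3]
      exact h_trans _ _ _ ih h2
  have pow_mono : ∀ z : G, le 1 z → ∀ p q : ℤ, p ≤ q → le (z ^ p) (z ^ q) := by
    intro z hz p q hpq
    obtain ⟨k, hk⟩ : ∃ k : ℕ, q = p + (k : ℤ) := ⟨(q - p).toNat, by omega⟩
    have h1 := h_left 1 (z ^ (k : ℤ)) (z ^ p) (key z hz k)
    rw [hk, zpow_add]
    simpa using h1
  have pow_anti : ∀ z : G, le z 1 → ∀ p q : ℤ, p ≤ q → le (z ^ q) (z ^ p) := by
    intro z hz p q hpq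
    have hz' : le 1 z⁻¹ := by simpa using h_left z 1 z⁻¹ hz
    have := pow_mono z⁻¹ hz' (-q) (-p) (by omega)
    simpa [zpow_neg, inv_zpow] using this
  intro y
  rcases h_total 1 (y * x * y⁻¹) with h1 | ha
  · exact h1
  -- ha : le (y * x * y⁻¹) 1
  have conj_pow : ∀ n : ℤ, y * x ^ n * y⁻¹ = (y * x * y⁻¹) ^ n := by
    intro n
    simpa [MulAut.conj_apply] using (map_zpow (MulAut.conj y) x n)
  -- the conjugated preorder
  set le2 : G → G → Prop := fun u v => le (y * u * y⁻¹) (y * v * y⁻¹) with hle2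
  have h2refl : ∀ a, le2 a a := fun a => h_refl _
  have h2trans : ∀ a b c, le2 a b → le2 b c → le2 a c := fun a b c h h' => h_trans _ _ _ h h'
  have h2total : ∀ a b, le2 a b ∨ le2 b a := fun a b => h_total _ _
  have h2left : ∀ a b c, le2 a b → le2 (c * a) (c * b) := by
    intro a b c h
    have := h_left _ _ (y * c * y⁻¹) h
    simpa [hle2, mul_assoc] using this
  have hcof2 := h_cofinal le2 h2refl h2trans h2total h2left
  -- every element is below (y*x*y⁻¹)^(-j) for some j : ℕ
  have hB : ∀ h : G, ∃ j : ℕ, le h ((y * x * y⁻¹) ^ (-(j : ℤ))) := by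
    intro h
    obtain ⟨n, hn⟩ := hcof2 (y⁻¹ * h * y)
    have hn' : le h ((y * x * y⁻¹) ^ n) := by
      have e : y * (y⁻¹ * h * y) * y⁻¹ = h := by group
      rw [hle2] at hn
      simp only [e, conj_pow n] at hn
      exact hn
    refine ⟨n.natAbs, h_trans _ _ _ hn' ?_⟩
    exact pow_anti _ ha (-(n.natAbs : ℤ)) n (by omega)
  -- hence x^m ≤ y⁻¹ for every m
  have hD : ∀ m : ℤ, le (x ^ m) y⁻¹ := by
    intro m
    obtain ⟨j, hj⟩ := hB (y * x ^ m)
    rw [← conj_pow] at hj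
    have h1 : le (x ^ m) (x ^ (-(j : ℤ)) * y⁻¹) := by
      have := h_left _ _ y⁻¹ hj
      simpa [mul_assoc] using this
    have h2 : le (x ^ ((j : ℤ) + m)) y⁻¹ := by
      have h3 := h_left _ _ (x ^ (j : ℤ)) h1
      have e1 : x ^ (j : ℤ) * x ^ m = x ^ ((j : ℤ) + m) := by
        rw [← zpow_add]
      have e2 : x ^ (j : ℤ) * (x ^ (-(j : ℤ)) * y⁻¹) = y⁻¹ := by
        rw [← mul_assoc, ← zpow_add]
        simp
      rw [e1, e2] at h3
      exact h3
    exact h_trans _ _ _ (pow_mono x hx m ((j : ℤ) + m) (by omega)) h2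
  -- x ≤ 1
  have hx1 : le x 1 := by
    obtain ⟨n, hn⟩ := h_cofinal le h_refl h_trans h_total h_left y⁻¹
    have h1 : le (x ^ (n + 1)) (x ^ n) := h_trans _ _ _ (hD (n + 1)) hn
    have h2 := h_left _ _ (x ^ (-n)) h1
    have e1 : x ^ (-n) * x ^ (n + 1) = x := by
      rw [← zpow_add]; simp
    have e2 : x ^ (-n) * x ^ n = 1 := by
      rw [← zpow_add]; simp
    rw [e1, e2] at h2
    exact h2
  -- hence all powers of x are ≤ 1
  have hxn : ∀ n : ℤ, le (x ^ n) 1 := by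
    intro n
    rcases le_or_gt n 0 with h | h
    · simpa using pow_mono x hx n 0 h
    · simpa using pow_anti x hx1 0 n h.le
  -- conclude
  obtain ⟨n, hn⟩ := h_cofinal le h_refl h_trans h_total h_left (y * x⁻¹ * y⁻¹)
  have h1 : le (y * x⁻¹ * y⁻¹) 1 := h_trans _ _ _ hn (hxn n)
  have h2 := h_left _ _ (y * x * y⁻¹) h1
  have e1 : y * x * y⁻¹ * (y * x⁻¹ * y⁻¹) = 1 := by group
  rw [e1, mul_one] at h2
  exact h2
end

section
/- Let G be a group, ≤ a left-invariant total preorder on G, and A a subset of G. Define S = {x ∈ G : for all a₁ in the subgroup ⟨A⟩ generated by A, there exists a₂ ∈ ⟨A⟩ with x·a₁ ≤ a₂}. Then S is a subsemigroup of G containing A ∪ A⁻¹, and S ∪ S⁻¹ = G. -/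
/-- For a left-invariant total preorder `≤` on `G` and a subset `A`, the set
`S = {x : ∀ a₁ ∈ ⟨A⟩, ∃ a₂ ∈ ⟨A⟩, x·a₁ ≤ a₂}` is a subsemigroup containing
`A ∪ A⁻¹` with `S ∪ S⁻¹ = G`. -/
theorem cofinality_semigroup {G : Type*} [Group G] (le : G → G → Prop)
    (h_refl : ∀ x, le x x)
    (h_trans : ∀ x y z, le x y → le y z → le x z)
    (h_total : ∀ x y, le x y ∨ le y x)
    (h_left : ∀ x y z, le x y → le (z * x) (z * y))
    (A : Set G) (S : Set G)
    (hS : ∀ x, x ∈ S ↔ ∀ a₁ ∈ Subgroup.closure A, ∃ a₂ ∈ Subgroup.closure A,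
      le (x * a₁) a₂) :
    (∀ x y, x ∈ S → y ∈ S → x * y ∈ S) ∧
    (∀ a ∈ A, a ∈ S ∧ a⁻¹ ∈ S) ∧
    (∀ x : G, x ∈ S ∨ x⁻¹ ∈ S) := by
  refine ⟨?_, ?_, ?_⟩
  · intro x y hx hy
    rw [hS] at hx hy ⊢
    intro a₁ ha₁
    obtain ⟨a₂, ha₂, h2⟩ := hy a₁ ha₁
    obtain ⟨a₃, ha₃, h3⟩ := hx a₂ ha₂
    refine ⟨a₃, ha₃, h_trans _ _ _ ?_ h3⟩
    have := h_left _ _ x h2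
    simpa [mul_assoc] using this
  · intro a ha
    have haH : a ∈ Subgroup.closure A := Subgroup.subset_closure ha
    constructor
    · rw [hS]
      intro a₁ ha₁
      exact ⟨a * a₁, mul_mem haH ha₁, h_refl _⟩
    · rw [hS]
      intro a₁ ha₁
      exact ⟨a⁻¹ * a₁, mul_mem (inv_mem haH) ha₁, h_refl _⟩
  · intro x
    by_cases hx : x ∈ S
    · exact Or.inl hx
    · right
      rw [hS] at hx ⊢
      push_neg at hx
      obtain ⟨a₁, ha₁, hbig⟩ := hx
      intro b₁ hb₁
      refine ⟨a₁, ha₁, ?_⟩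
      have h1 : le b₁ (x * a₁) := (h_total _ _).resolve_left (hbig b₁ hb₁)
      have := h_left _ _ x⁻¹ h1
      simpa [mul_assoc] using this
end

section
/- Let G be a group and S a subsemigroup of G with S ∪ S⁻¹ = G. Then P := S \ S⁻¹ is a subsemigroup of G, G is the disjoint union of P, S ∩ S⁻¹, and P⁻¹, the set H := S ∩ S⁻¹ is a subgroup of G, and H·P·H ⊆ P. -/
/-- If `S` is a subsemigroup of `G` with `S ∪ S⁻¹ = G`, then `P = S \ S⁻¹` is a
subsemigroup, `G = P ⊔ (S ∩ S⁻¹) ⊔ P⁻¹` is a disjoint union,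
`H = S ∩ S⁻¹` is a subgroup, and `HPH ⊆ P`. -/
theorem semigroup_partition {G : Type*} [Group G] (S : Set G)
    (hS_mul : ∀ x y, x ∈ S → y ∈ S → x * y ∈ S)
    (hS_total : ∀ x : G, x ∈ S ∨ x⁻¹ ∈ S)
    (P H : Set G)
    (hP : ∀ x, x ∈ P ↔ x ∈ S ∧ x⁻¹ ∉ S)
    (hH : ∀ x, x ∈ H ↔ x ∈ S ∧ x⁻¹ ∈ S) :
    (∀ x y, x ∈ P → y ∈ P → x * y ∈ P) ∧
    (∀ x : G, x ∈ P ∨ x ∈ H ∨ x⁻¹ ∈ P) ∧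
    (∀ x : G, ¬ (x ∈ P ∧ x ∈ H)) ∧
    (∀ x : G, ¬ (x ∈ P ∧ x⁻¹ ∈ P)) ∧
    (∀ x : G, ¬ (x ∈ H ∧ x⁻¹ ∈ P)) ∧
    ((1 : G) ∈ H ∧ (∀ x y, x ∈ H → y ∈ H → x * y ∈ H) ∧ (∀ x, x ∈ H → x⁻¹ ∈ H)) ∧
    (∀ h p h', h ∈ H → p ∈ P → h' ∈ H → h * p * h' ∈ P) := by
  have h1S : (1 : G) ∈ S := by
    rcases hS_total 1 with h | h
    · exact h
    · simpa using h
  refine ⟨?_, ?_, ?_, ?_, ?_, ⟨?_, ?_, ?_⟩, ?_⟩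
  · intro x y hx hy
    rw [hP] at hx hy ⊢
    refine ⟨hS_mul _ _ hx.1 hy.1, fun hmem => hx.2 ?_⟩
    have : y * (x * y)⁻¹ ∈ S := hS_mul _ _ hy.1 hmem
    simpa [mul_assoc] using this
  · intro x
    rcases hS_total x with hx | hx
    · by_cases hx' : x⁻¹ ∈ S
      · exact Or.inr (Or.inl ((hH x).2 ⟨hx, hx'⟩))
      · exact Or.inl ((hP x).2 ⟨hx, hx'⟩)
    · by_cases hx' : x ∈ S
      · exact Or.inr (Or.inl ((hH x).2 ⟨hx', hx⟩))
      · exact Or.inr (Or.inr ((hP x⁻¹).2 ⟨hx, by simpa using hx'⟩))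
  · rintro x ⟨hp, hh⟩
    exact ((hP x).1 hp).2 ((hH x).1 hh).2
  · rintro x ⟨hp, hp'⟩
    exact ((hP x).1 hp).2 ((hP x⁻¹).1 hp').1
  · rintro x ⟨hh, hp'⟩
    exact ((hP x⁻¹).1 hp').2 (by simpa using ((hH x).1 hh).1)
  · exact (hH 1).2 ⟨h1S, by simpa using h1S⟩
  · intro x y hx hy
    rw [hH] at hx hy ⊢
    refine ⟨hS_mul _ _ hx.1 hy.1, ?_⟩
    have := hS_mul _ _ hy.2 hx.2
    simpa [mul_inv_rev] using this
  · intro x hx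
    rw [hH] at hx ⊢
    exact ⟨hx.2, by simpa using hx.1⟩
  · intro h p h' hh hp hh'
    rw [hH] at hh hh'
    rw [hP] at hp ⊢
    refine ⟨hS_mul _ _ (hS_mul _ _ hh.1 hp.1) hh'.1, fun hmem => hp.2 ?_⟩
    have : h' * ((h * p * h')⁻¹ * h) ∈ S := hS_mul _ _ hh'.1 (hS_mul _ _ hmem hh.1)
    simpa [mul_assoc, mul_inv_rev] using this
end

section
/- Let G be a group and let g, f ∈ G, and suppose f⁻¹ lies in the submonoid of G generated by f together with the centraliser of g. If P is a binary relation on G that is irreflexive, transitive and invariant under conjugation (P(x,y) → P(z·x·z⁻¹, z·y·z⁻¹)), and P(f·g·f⁻¹, g) holds, then False. -/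
/-- If `P` is an irreflexive, transitive, conjugation-invariant binary relation
on `G` with `P (f·g·f⁻¹) g`, and `f⁻¹` lies in the monoid generated by `f` and
the centraliser of `g`, then we obtain a contradiction. -/
theorem no_relation_of_monoid_membership {G : Type*} [Group G]
    (P : G → G → Prop)
    (h_irr : ∀ x, ¬ P x x)
    (h_trans : ∀ x y z, P x y → P y z → P x z)
    (h_conj : ∀ x y z, P x y → P (z * x * z⁻¹) (z * y * z⁻¹))
    (f g : G)
    (hP : P (f * g * f⁻¹) g)
    (hf : f⁻¹ ∈ Submonoid.closure ({f} ∪ {x : G | x * g = g * x})) :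
    False := by
  have key : ∀ m ∈ Submonoid.closure ({f} ∪ {x : G | x * g = g * x}),
      m * g * m⁻¹ = g ∨ P (m * g * m⁻¹) g := by
    intro m hm
    induction hm using Submonoid.closure_induction with
    | one => left; simp
    | mem x hx =>
      rcases hx with hx | hx
      · right; rwa [Set.mem_singleton_iff.mp hx]
      · left; rw [Set.mem_setOf_eq] at hx
        rw [hx]; group
    | mul a b _ _ ha hb =>
      have hab : a * b * g * (a * b)⁻¹ = a * (b * g * b⁻¹) * a⁻¹ := by group
      rcases hb with hb | hb
      · rw [hab, hb]; exact ha
      · have h1 : P (a * (b * g * b⁻¹) * a⁻¹) (a * g * a⁻¹) := h_conj _ _ a hb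
        rcases ha with ha | ha
        · right; rw [hab]; rwa [ha] at h1
        · right; rw [hab]; exact h_trans _ _ _ h1 ha
  rcases key f⁻¹ hf with h | h
  · -- f⁻¹ * g * f = g, so f * g * f⁻¹ = g, contradicting irreflexivity
    apply h_irr g
    have : f * g * f⁻¹ = g := by
      have := congrArg (fun x => f * x * f⁻¹) h
      rw [← this]; group
    rwa [this] at hP
  · -- P (f⁻¹ g f) g and conjugating hP by f⁻¹ gives P g (f⁻¹ g f)
    have h2 : P (f⁻¹ * (f * g * f⁻¹) * f⁻¹⁻¹) (f⁻¹ * g * f⁻¹⁻¹) := h_conj _ _ f⁻¹ hP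
    simp only [inv_inv] at h2
    have h3 : f⁻¹ * (f * g * f⁻¹) * f = g := by group
    rw [h3] at h2
    simp only [inv_inv] at h
    exact h_irr g (h_trans _ _ _ h2 h)
end

section
/- Let G be a group, g ∈ G, and f ∈ G such that f⁻¹ is NOT in the monoid generated by f and the centraliser of g. Define P(x,y) to hold iff there exist z₁, z₂ ∈ G with z₂ in the monoid generated by f and the centraliser of g, such that x = z₁·z₂·f·g·f⁻¹·z₂⁻¹·z₁⁻¹ and y = z₁·g·z₁⁻¹. Then P is irreflexive, transitive, conjugation-invariant (P(x,y) implies P(z·x·z⁻¹, z·y·z⁻¹)), and P(f·g·f⁻¹, g) holds. -/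
/-- If `f⁻¹` is not in the monoid generated by `f` and the centraliser of `g`,
then the relation `P(x,y) ↔ ∃ z₁ z₂ with z₂ in that monoid, x = z₁z₂(fgf⁻¹)z₂⁻¹z₁⁻¹
and y = z₁gz₁⁻¹` is irreflexive, transitive, conjugation-invariant, and
satisfies `P (f·g·f⁻¹) g`. -/
theorem relation_of_non_monoid_membership {G : Type*} [Group G] (f g : G)
    (hf : f⁻¹ ∉ Submonoid.closure ({f} ∪ {x : G | x * g = g * x}))
    (P : G → G → Prop)
    (hP : ∀ x y, P x y ↔ ∃ z₁ z₂ : G,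
      z₂ ∈ Submonoid.closure ({f} ∪ {x : G | x * g = g * x}) ∧
      x = z₁ * (z₂ * (f * g * f⁻¹) * z₂⁻¹) * z₁⁻¹ ∧
      y = z₁ * g * z₁⁻¹) :
    (∀ x, ¬ P x x) ∧
    (∀ x y z, P x y → P y z → P x z) ∧
    (∀ x y z, P x y → P (z * x * z⁻¹) (z * y * z⁻¹)) ∧
    P (f * g * f⁻¹) g := by
  set S : Set G := {f} ∪ {x : G | x * g = g * x} with hS
  have hfS : f ∈ Submonoid.closure S := Submonoid.subset_closure (Or.inl rfl)
  have hcent : ∀ c : G, c * g = g * c → c ∈ Submonoid.closure S :=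
    fun c hc => Submonoid.subset_closure (Or.inr hc)
  refine ⟨?_, ?_, ?_, ?_⟩
  · intro x hx
    obtain ⟨a, b, hb, hx1, hx2⟩ := (hP x x).1 hx
    rw [hx2] at hx1
    have h1 : b * (f * g * f⁻¹) * b⁻¹ = g := by
      have := mul_left_cancel (mul_right_cancel hx1)
      exact this.symm
    have h2 : (b * f)⁻¹ * g = g * (b * f)⁻¹ := by
      have : (b * f) * g = g * (b * f) := by
        have : (b * f) * g * (b * f)⁻¹ = g := by
          calc (b * f) * g * (b * f)⁻¹ = b * (f * g * f⁻¹) * b⁻¹ := by group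
            _ = g := h1
        calc (b * f) * g = ((b * f) * g * (b * f)⁻¹) * (b * f) := by group
          _ = g * (b * f) := by rw [this]
      calc (b * f)⁻¹ * g = (b * f)⁻¹ * ((b * f) * g * (b * f)⁻¹) := by rw [this]; group
        _ = g * (b * f)⁻¹ := by group
    have : f⁻¹ ∈ Submonoid.closure S := by
      have h3 : f⁻¹ = (b * f)⁻¹ * b := by group
      rw [h3]
      exact Submonoid.mul_mem _ (hcent _ h2) hb
    exact hf this
  · intro x y z hxy hyz
    obtain ⟨a, b, hb, hx1, hy1⟩ := (hP x y).1 hxy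
    obtain ⟨a', b', hb', hy2, hz1⟩ := (hP y z).1 hyz
    set c : G := (b' * f)⁻¹ * (a'⁻¹ * a) with hc
    have hceq : c * g * c⁻¹ = g := by
      have h4 : c * g * c⁻¹ = (b' * f)⁻¹ * a'⁻¹ * (a * g * a⁻¹) * a' * (b' * f) := by
        rw [hc]; group
      rw [← hy1, hy2] at h4
      rw [h4]; group
    have hcg : c * g = g * c := by
      calc c * g = (c * g * c⁻¹) * c := by group
        _ = g * c := by rw [hceq]
    have ha : a = a' * (b' * f * c) := by rw [hc]; group
    refine (hP x z).2 ⟨a', b' * f * c * b, ?_, ?_, hz1⟩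
    · exact Submonoid.mul_mem _ (Submonoid.mul_mem _ (Submonoid.mul_mem _ hb' hfS)
        (hcent _ hcg)) hb
    · rw [hx1, ha]; group
  · intro x y z hxy
    obtain ⟨a, b, hb, hx1, hy1⟩ := (hP x y).1 hxy
    refine (hP _ _).2 ⟨z * a, b, hb, ?_, ?_⟩
    · rw [hx1]; group
    · rw [hy1]; group
  · exact (hP _ _).2 ⟨1, 1, Submonoid.one_mem _, by group, by group⟩
end
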